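/- For every prefix p ∈ Γ*, every m ∈ ℕ⁺, and every Γ-labeled forest S: the duplicator has a winning strategy in the game G_S(Ã^p_m, B̃^p_m) if and only if she has a winning strategy in the game G_S(Ã^{−p}_m, B̃^{−p}_m), where Ã^{−p}_m and B̃^{−p}_m are obtained from Ã^p_m and B̃^p_m by exchanging the colours of all edges (red with blue). -/

import Mathlib

namespace QSH

open FirstOrder Language

/-! ### Γ-labelled forests -/

/-- The two quantifier labels `∃` and `∀` (the set Γ). -/
inductive Quant : Type where
  | ex : Quant
  | fa : Quant
deriving DecidableEq

instance : Fintype Quant where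
  elems := {.ex, .fa}
  complete := by intro x; cases x <;> simp

instance : Inhabited Quant := ⟨.ex⟩

/-- A Γ-labelled directed graph: a type of nodes, an arc relation
(directed from parent to child) and a labelling of nodes by `∃`/`∀`.
Γ-labelled forests and quantifier structures of formulas are such graphs. -/
structure QGraph : Type 1 where
  V : Type
  arc : V → V → Prop
  lab : V → Quant

/-- `S₁ ⪯ₑ S₂`: there is a (not necessarily injective) label-preserving map `ι`
from the nodes of `S₁` to the nodes of `S₂` such that whenever `S₁` has an arc
from `x` to `y`, `S₂` has a nontrivial directed path from `ι x` to `ι y`. -/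
def QGraph.Embeds (S₁ S₂ : QGraph) : Prop :=
  ∃ ι : S₁.V → S₂.V,
    (∀ v, S₂.lab (ι v) = S₁.lab v) ∧
    ∀ x y, S₁.arc x y → Relation.TransGen S₂.arc (ι x) (ι y)

/-- `W(S)`: the set of words in Γ* that are subsequences of the label-words
read along directed paths of `S`. -/
def QGraph.Words (S : QGraph) : Set (List Quant) :=
  { w | ∃ l : List S.V, l.Chain' S.arc ∧ w.Sublist (l.map S.lab) }

/-- Isomorphism of Γ-labelled graphs ("having the same quantifier structure"). -/
def QGraph.Iso (G H : QGraph) : Prop :=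
  ∃ e : G.V ≃ H.V, (∀ v, H.lab (e v) = G.lab v) ∧ ∀ x y, G.arc x y ↔ H.arc (e x) (e y)

/-- A root: a node with no incoming arc. -/
def QGraph.isRoot (S : QGraph) (v : S.V) : Prop := ∀ w, ¬ S.arc w v

/-- The empty Γ-labelled graph. -/
def QGraph.empty : QGraph :=
  ⟨Empty, fun _ _ => False, fun x => x.elim⟩

/-- Disjoint union of two Γ-labelled graphs. -/
def QGraph.union (G H : QGraph) : QGraph where
  V := G.V ⊕ H.V
  arc := Sum.LiftRel G.arc H.arc
  lab := Sum.elim G.lab H.lab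

/-- Add a new root labelled `q`, with an arc to each root of `G`. -/
def QGraph.addRoot (q : Quant) (G : QGraph) : QGraph where
  V := Option G.V
  arc x y :=
    match x, y with
    | some a, some b => G.arc a b
    | none, some b => G.isRoot b
    | _, none => False
  lab x := x.elim q G.lab

/-- A finite Γ-labelled forest: a finite Γ-labelled digraph in which every node
has at most one parent and which has no directed cycles, i.e. a finite disjoint
union of rooted trees with arcs directed from parent to child. -/
structure LForest : Type 1 extends QGraph where
  finV : Finite V
  parent_unique : ∀ ⦃x y z : V⦄, arc x z → arc y z → x = y
  acyclic : ∀ x : V, ¬ Relation.TransGen arc x x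

/-! ### First-order formulas in negation normal form, their semantics, and
their quantifier structures -/

universe u v w

/-- Realization of a term, with the structure as explicit data. -/
def TermRealize {L : FirstOrder.Language.{u, v}} {M : Type w} (str : L.Structure M) {α : Type*}
    (vmap : α → M) : L.Term α → M
  | .var a => vmap a
  | .func f ts => str.funMap f fun i => TermRealize str vmap (ts i)

/-- First-order formulas in negation normal form with free variables among `Fin n`. -/
inductive NNF (L : FirstOrder.Language.{u, v}) : ℕ → Type (max u v) where
  | verum {n : ℕ} : NNF L n
  | falsum {n : ℕ} : NNF L n
  | eq {n : ℕ} (t₁ t₂ : L.Term (Fin n)) : NNF L n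
  | ne {n : ℕ} (t₁ t₂ : L.Term (Fin n)) : NNF L n
  | rel {n m : ℕ} (R : L.Relations m) (ts : Fin m → L.Term (Fin n)) : NNF L n
  | nrel {n m : ℕ} (R : L.Relations m) (ts : Fin m → L.Term (Fin n)) : NNF L n
  | conj {n : ℕ} (φ ψ : NNF L n) : NNF L n
  | disj {n : ℕ} (φ ψ : NNF L n) : NNF L n
  | ex {n : ℕ} (φ : NNF L (n + 1)) : NNF L n
  | fa {n : ℕ} (φ : NNF L (n + 1)) : NNF L n

/-- Tarskian satisfaction for `NNF` formulas. -/
def NNF.Realize {L : FirstOrder.Language.{u, v}} {M : Type w} (str : L.Structure M) :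
    ∀ {n : ℕ}, NNF L n → (Fin n → M) → Prop
  | _, .verum, _ => True
  | _, .falsum, _ => False
  | _, .eq t₁ t₂, vv => TermRealize str vv t₁ = TermRealize str vv t₂
  | _, .ne t₁ t₂, vv => TermRealize str vv t₁ ≠ TermRealize str vv t₂
  | _, .rel R ts, vv => str.RelMap R fun i => TermRealize str vv (ts i)
  | _, .nrel R ts, vv => ¬ str.RelMap R fun i => TermRealize str vv (ts i)
  | _, .conj φ ψ, vv => φ.Realize str vv ∧ ψ.Realize str vv
  | _, .disj φ ψ, vv => φ.Realize str vv ∨ ψ.Realize str vv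
  | _, .ex φ, vv => ∃ x : M, φ.Realize str (Fin.snoc vv x)
  | _, .fa φ, vv => ∀ x : M, φ.Realize str (Fin.snoc vv x)

/-- The quantifier structure `qs φ` of an NNF formula: empty for literals,
disjoint union for conjunction/disjunction, and a new labelled root
above `qs` of the body for quantifiers. -/
def NNF.qs {L : FirstOrder.Language.{u, v}} : ∀ {n : ℕ}, NNF L n → QGraph
  | _, .verum => QGraph.empty
  | _, .falsum => QGraph.empty
  | _, .eq _ _ => QGraph.empty
  | _, .ne _ _ => QGraph.empty
  | _, .rel _ _ => QGraph.empty
  | _, .nrel _ _ => QGraph.empty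
  | _, .conj φ ψ => φ.qs.union ψ.qs
  | _, .disj φ ψ => φ.qs.union ψ.qs
  | _, .ex φ => φ.qs.addRoot .ex
  | _, .fa φ => φ.qs.addRoot .fa

/-- Renaming of free variables. -/
def NNF.relabel {L : FirstOrder.Language.{u, v}} : ∀ {n k : ℕ}, NNF L n → (Fin n → Fin k) → NNF L k
  | _, _, .verum, _ => .verum
  | _, _, .falsum, _ => .falsum
  | _, _, .eq t₁ t₂, f => .eq (t₁.relabel f) (t₂.relabel f)
  | _, _, .ne t₁ t₂, f => .ne (t₁.relabel f) (t₂.relabel f)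
  | _, _, .rel R ts, f => .rel R fun i => (ts i).relabel f
  | _, _, .nrel R ts, f => .nrel R fun i => (ts i).relabel f
  | _, _, .conj φ ψ, f => .conj (φ.relabel f) (ψ.relabel f)
  | _, _, .disj φ ψ, f => .disj (φ.relabel f) (ψ.relabel f)
  | _, _, .ex φ, f => .ex (φ.relabel (Fin.snoc (fun i => (f i).castSucc) (Fin.last _)))
  | _, _, .fa φ, f => .fa (φ.relabel (Fin.snoc (fun i => (f i).castSucc) (Fin.last _)))

/-- Substitution of terms for free variables. -/
def NNF.subst {L : FirstOrder.Language.{u, v}} :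
    ∀ {n k : ℕ}, NNF L n → (Fin n → L.Term (Fin k)) → NNF L k
  | _, _, .verum, _ => .verum
  | _, _, .falsum, _ => .falsum
  | _, _, .eq t₁ t₂, f => .eq (t₁.subst f) (t₂.subst f)
  | _, _, .ne t₁ t₂, f => .ne (t₁.subst f) (t₂.subst f)
  | _, _, .rel R ts, f => .rel R fun i => (ts i).subst f
  | _, _, .nrel R ts, f => .nrel R fun i => (ts i).subst f
  | _, _, .conj φ ψ, f => .conj (φ.subst f) (ψ.subst f)
  | _, _, .disj φ ψ, f => .disj (φ.subst f) (ψ.subst f)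
  | _, _, .ex φ, f =>
      .ex (φ.subst (Fin.snoc (fun i => (f i).relabel Fin.castSucc) (Term.var (Fin.last _))))
  | _, _, .fa φ, f =>
      .fa (φ.subst (Fin.snoc (fun i => (f i).relabel Fin.castSucc) (Term.var (Fin.last _))))

/-! ### Concrete signatures -/

/-- The relation symbols of the signature `τ = ⟨E⟩` of digraphs. -/
inductive TauRel : ℕ → Type where
  | E : TauRel 2

/-- The signature `τ = ⟨E⟩` of digraphs: one binary relation symbol. -/
def tau : FirstOrder.Language := ⟨fun _ => Empty, TauRel⟩

/-- The function symbols of `τ⁺`: the single constant `r`. -/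
inductive TauPlusFun : ℕ → Type where
  | r : TauPlusFun 0

/-- The relation symbols of `τ⁺`: `U` unary, `R`, `B` binary. -/
inductive TauPlusRel : ℕ → Type where
  | U : TauPlusRel 1
  | R : TauPlusRel 2
  | B : TauPlusRel 2

/-- The signature `τ⁺ = ⟨U, R, B, r⟩`. -/
def tauPlus : FirstOrder.Language := ⟨TauPlusFun, TauPlusRel⟩

/-- The relation symbols of `τ⁺ᴼᴿᴰ`: those of `τ⁺` together with `≤`. -/
inductive TauPlusOrdRel : ℕ → Type where
  | U : TauPlusOrdRel 1
  | R : TauPlusOrdRel 2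
  | B : TauPlusOrdRel 2
  | le : TauPlusOrdRel 2

/-- The signature `τ⁺ᴼᴿᴰ = ⟨U, R, B, r, ≤⟩`. -/
def tauPlusOrd : FirstOrder.Language := ⟨TauPlusFun, TauPlusOrdRel⟩

/-- The relation symbols of `⟨E, ≤⟩`. -/
inductive TauOrdRel : ℕ → Type where
  | E : TauOrdRel 2
  | le : TauOrdRel 2

/-- The signature `⟨E, ≤⟩` of ordered digraphs. -/
def tauOrd : FirstOrder.Language := ⟨fun _ => Empty, TauOrdRel⟩

/-- A bundled finite `L`-structure. -/
structure FinStr (L : FirstOrder.Language.{u, v}) where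
  carrier : Type
  fin : Finite carrier
  str : L.Structure carrier

/-- Satisfaction of an NNF sentence in a bundled finite structure. -/
def FinStr.Sat {L : FirstOrder.Language.{u, v}} (M : FinStr L) (φ : NNF L 0) : Prop :=
  φ.Realize M.str fun i => i.elim0

/-- `r` is a linear order (transitive, antisymmetric and total). -/
def IsLinearOrderRel {M : Type*} (r : M → M → Prop) : Prop :=
  (∀ x y z, r x y → r y z → r x z) ∧ (∀ x y, r x y → r y x → x = y) ∧ (∀ x y, r x y ∨ r y x)

/-! ### The Ehrenfeucht–Fraïssé style game `G_S(𝔄, 𝔅)` -/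

/-- `(as, bs)` defines a partial isomorphism between `A` and `B`: the map sending
the interpretations of the constants (more generally, of all closed terms in the
picked elements) of `A` to those of `B` preserves equalities and all relations. -/
def PIso {L : FirstOrder.Language.{u, v}} {A : Type*} {B : Type*} (sA : L.Structure A)
    (sB : L.Structure B) {t : ℕ} (as : Fin t → A) (bs : Fin t → B) : Prop :=
  (∀ t₁ t₂ : L.Term (Fin t),
      TermRealize sA as t₁ = TermRealize sA as t₂ ↔
        TermRealize sB bs t₁ = TermRealize sB bs t₂) ∧
  (∀ (m : ℕ) (R : L.Relations m) (ts : Fin m → L.Term (Fin t)),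
      (sA.RelMap R fun i => TermRealize sA as (ts i)) ↔
        (sB.RelMap R fun i => TermRealize sB bs (ts i)))

/-- The history of a play (the pairs of elements picked so far, in order)
defines a partial isomorphism. -/
def HistOK {L : FirstOrder.Language.{u, v}} {A B : Type*} (sA : L.Structure A) (sB : L.Structure B)
    (h : List (A × B)) : Prop :=
  PIso sA sB (fun i : Fin h.length => (h.get i).1) (fun i : Fin h.length => (h.get i).2)

/-- The duplicator can survive (at least) `k` more rounds of the game, the token
being on node `v` and `h` being the history of picked pairs: in the round at `v`,
if `v` is labelled `∃` the spoiler picks in `A` and the duplicator answers in `B`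
(dually for `∀`); the extended history must still be a partial isomorphism, and
she must survive whichever child of `v` the spoiler moves the token to. -/
def DWinN {L : FirstOrder.Language.{u, v}} {A B : Type*} (S : QGraph) (sA : L.Structure A)
    (sB : L.Structure B) : ℕ → S.V → List (A × B) → Prop
  | 0, _, _ => True
  | k + 1, v, h =>
    match S.lab v with
    | .ex => ∀ a : A, ∃ b : B, HistOK sA sB (h ++ [(a, b)]) ∧
        ∀ w : S.V, S.arc v w → DWinN S sA sB k w (h ++ [(a, b)])
    | .fa => ∀ b : B, ∃ a : A, HistOK sA sB (h ++ [(a, b)]) ∧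
        ∀ w : S.V, S.arc v w → DWinN S sA sB k w (h ++ [(a, b)])

/-- The duplicator has a winning strategy in the game `G_S(𝔄, 𝔅)` played with the
initial history `h` (the empty history corresponds to the plain game): the initial
position must be a partial isomorphism, and whichever tree of the forest `S` the
spoiler picks, she can survive the play down that tree.  (Since `S` is a finite
forest, every play lasts at most `Nat.card S.V` rounds, so the fuel
`Nat.card S.V + 1` never runs out.) -/
def DupWinsFrom {L : FirstOrder.Language.{u, v}} {A B : Type*} (S : LForest) (sA : L.Structure A)
    (sB : L.Structure B) (h : List (A × B)) : Prop :=
  HistOK sA sB h ∧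
  ∀ v : S.V, S.toQGraph.isRoot v → DWinN S.toQGraph sA sB (Nat.card S.V + 1) v h

/-- The duplicator has a winning strategy in the game `G_S(𝔄, 𝔅)`. -/
def DupWins {L : FirstOrder.Language.{u, v}} {A B : Type*} (S : LForest) (sA : L.Structure A)
    (sB : L.Structure B) : Prop :=
  DupWinsFrom S sA sB []

end QSH
namespace QSH

open FirstOrder Language

/-! ### The forest `𝓕(P)` of a set of prefixes: the prefix tree (trie) of `P` -/

private lemma transGen_nat_lt {α : Type*} {r : α → α → Prop} (f : α → ℕ)
    (h : ∀ x y, r x y → f x < f y) {x y : α} (hxy : Relation.TransGen r x y) :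
    f x < f y := by
  induction hxy with
  | single h' => exact h _ _ h'
  | tail _ h' ih => exact ih.trans (h _ _ h')

/-- The Γ-labelled graph `𝓕(P)` for a set of prefixes `P ⊆ Γ*`: its nodes are the
nonempty initial segments of words of `P`, a node `w` is labelled by its last
letter, and there is an arc from `w` to `w ++ [s]`.  This is the forest obtained
by the recursive definition: `𝓕(∅)` is empty, and writing
`P = (∃ * P₁) ∪ (∀ * P₂)`, `𝓕(P)` is the disjoint union of a tree with an
`∃`-labelled root with an arc to each root of `𝓕(P₁)` and a tree with a
`∀`-labelled root with an arc to each root of `𝓕(P₂)` (omitting a tree when the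
corresponding part of `P` is empty). -/
abbrev trieGraph (P : Set (List Quant)) : QGraph where
  V := {w : List Quant // w ≠ [] ∧ ∃ q ∈ P, w <+: q}
  arc x y := ∃ s : Quant, (y : List Quant) = (x : List Quant) ++ [s]
  lab w := (w : List Quant).getLast w.2.1

/-- For finite `P`, the forest `𝓕(P)` as a finite Γ-labelled forest. -/
noncomputable def forestOf (P : Set (List Quant)) (hP : P.Finite) : LForest where
  toQGraph := trieGraph P
  finV := by
    have hfin : {w : List Quant | w ≠ [] ∧ ∃ q ∈ P, w <+: q}.Finite := by
      refine Set.Finite.subset (hP.biUnion fun q _ => q.inits.finite_toSet) ?_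
      rintro w ⟨-, q, hq, hpre⟩
      exact Set.mem_biUnion hq ((List.mem_inits _ _).mpr hpre)
    exact hfin.to_subtype
  parent_unique := by
    rintro x y z ⟨s, hs⟩ ⟨s', hs'⟩
    apply Subtype.ext
    have h2 : (x : List Quant) ++ [s] = (y : List Quant) ++ [s'] := by rw [← hs, ← hs']
    exact (List.append_inj' h2 rfl).1
  acyclic := by
    intro x hx
    have key : ∀ a b, (trieGraph P).arc a b →
        (a : List Quant).length < (b : List Quant).length := by
      rintro a b ⟨s, hs⟩
      simp [hs]
    exact absurd (transGen_nat_lt _ key hx) (lt_irrefl _)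

/-- A prefix `p ∈ Γ*`, viewed as a Γ-labelled degenerate tree (a directed path
whose `i`-th node is labelled `p[i]`). -/
noncomputable def pathForest (p : List Quant) : LForest :=
  forestOf {p} (Set.finite_singleton p)

/-- `f^p_m`: the set of prefixes of length at most `m` in which `p` does not embed
(i.e. of which `p` is not a subsequence). -/
def fpm (p : List Quant) (m : ℕ) : Set (List Quant) :=
  {q | ¬ p.Sublist q ∧ q.length ≤ m}

lemma fpm_finite (p : List Quant) (m : ℕ) : (fpm p m).Finite := by
  refine Set.Finite.subset (List.finite_length_le Quant m) ?_
  rintro q ⟨-, hq⟩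
  exact hq

end QSH
namespace QSH

open FirstOrder Language

/-! ### The edge-coloured trees `Ã^p_m` and `B̃^p_m` -/

/-- A finite tree with `Bool`-coloured nodes (`true` = black) and
`Bool`-coloured edges to the children (`true` = red, `false` = blue). -/
inductive CT : Type where
  | node : Bool → List (Bool × CT) → CT

/-- Is the root of this tree black? -/
def CT.isBlack : CT → Bool
  | .node b _ => b

/-- The children of the root, together with the colours of the edges to them. -/
def CT.children : CT → List (Bool × CT)
  | .node _ cs => cs

/-- The subtree at a given address (a list of child indices), if it exists. -/
def CT.sub : List ℕ → CT → Option CT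
  | [], t => some t
  | i :: rest, t =>
    match t.children[i]? with
    | some p => CT.sub rest p.2
    | none => none

/-- The nodes of the tree `t`: the valid addresses. -/
abbrev CT.Node (t : CT) : Type := {addr : List ℕ // (CT.sub addr t).isSome = true}

/-- The root of the tree. -/
def CT.rootNode (t : CT) : t.Node := ⟨[], rfl⟩

/-- There is an edge of colour `col` from the node at address `x` to the node at
address `y` (so `y` is a child of `x`). -/
def CT.edgeC (t : CT) (col : Bool) (x y : List ℕ) : Prop :=
  ∃ (i : ℕ) (s : CT) (p : Bool × CT),
    CT.sub x t = some s ∧ s.children[i]? = some p ∧ p.1 = col ∧ y = x ++ [i]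

/-- The node at address `x` is black. -/
def CT.blackAt (t : CT) (x : List ℕ) : Prop :=
  ∃ s, CT.sub x t = some s ∧ s.isBlack = true

/-- The node at address `x` is a leaf. -/
def CT.leafAt (t : CT) (x : List ℕ) : Prop :=
  ∃ s, CT.sub x t = some s ∧ s.children = []

/-- Exchange the colours of all edges (red ↔ blue): `Ã^{-p}_m` from `Ã^p_m`. -/
def CT.swap : CT → CT
  | .node b cs => .node b (cs.attach.map fun p => (!p.1.1, CT.swap p.1.2))
decreasing_by
  obtain ⟨⟨c, t⟩, hm⟩ := p
  have h := List.sizeOf_lt_of_mem hm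
  simp only [Prod.mk.sizeOf_spec, CT.node.sizeOf_spec] at h ⊢
  omega

/-- Join two trees at their roots (the shared root, the "junction point"). -/
def CT.joinRoots : CT → CT → CT
  | .node b cs, .node _ ds => .node b (cs ++ ds)

/-- A depth-1 tree whose edges are all red, with `kb` black leaves and
`kw` non-black leaves. -/
def starT (kb kw : ℕ) : CT :=
  .node false
    (List.replicate kb (true, CT.node true []) ++ List.replicate kw (true, CT.node false []))

/-- The pair `(Ã^p_m, B̃^p_m)` for the prefix `p = s :: q`, built by recursion:
* `Ã^∃_m` is a depth-1 all-red tree with `2m+1` leaves, exactly one black, and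
  `B̃^∃_m` has `2m` leaves, none black;
* `Ã^∀_m` has `2m` leaves, all black, and `B̃^∀_m` has `2m+1` leaves, all black
  except one;
* for `p = ∃q`, with `D^{X,Y}_{q,m}` the join at the roots of a copy of `X̃^q_m`
  and a copy of `Ỹ^{-q}_m`, `Ã^{∃q}_m` has a root joined by red edges to the
  junction points of one copy of `D^{A,A}`, `m` copies of `D^{A,B}` and `m`
  copies of `D^{B,A}`, while `B̃^{∃q}_m` omits the copy of `D^{A,A}`;
* `Ã^{∀q}_m` is defined as `B̃^{∃q}_m`, and `B̃^{∀q}_m` as `Ã^{∃q}_m` with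
  `D^{A,A}` replaced by a copy of `D^{B,B}`. -/
def ABt : Quant → List Quant → ℕ → CT × CT
  | .ex, [], m => (starT 1 (2 * m), starT 0 (2 * m))
  | .fa, [], m => (starT (2 * m) 0, starT (2 * m) 1)
  | .ex, s :: q, m =>
    let P := ABt s q m
    let DAA := P.1.joinRoots P.1.swap
    let DAB := P.1.joinRoots P.2.swap
    let DBA := P.2.joinRoots P.1.swap
    ( .node false ((true, DAA) ::
        (List.replicate m (true, DAB) ++ List.replicate m (true, DBA))),
      .node false (List.replicate m (true, DAB) ++ List.replicate m (true, DBA)) )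
  | .fa, s :: q, m =>
    let P := ABt s q m
    let DAB := P.1.joinRoots P.2.swap
    let DBA := P.2.joinRoots P.1.swap
    let DBB := P.2.joinRoots P.2.swap
    ( .node false (List.replicate m (true, DAB) ++ List.replicate m (true, DBA)),
      .node false ((true, DBB) ::
        (List.replicate m (true, DAB) ++ List.replicate m (true, DBA))) )

/-- The structure `Ã^p_m` (for nonempty `p`). -/
def Atil : List Quant → ℕ → CT
  | [], _ => CT.node false []
  | s :: q, m => (ABt s q m).1

/-- The structure `B̃^p_m` (for nonempty `p`). -/
def Btil : List Quant → ℕ → CT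
  | [], _ => CT.node false []
  | s :: q, m => (ABt s q m).2

/-- The `τ⁺`-interpretation of the constant `r` on the nodes of `t`: the root. -/
def ctFunMap (t : CT) : ∀ {n : ℕ}, TauPlusFun n → (Fin n → t.Node) → t.Node
  | _, .r, _ => t.rootNode

/-- The `τ⁺`-interpretation of `U`, `R`, `B` on the nodes of `t`: `U` holds of
the black nodes, `R` of the red edges and `B` of the blue edges. -/
def ctRelMap (t : CT) : ∀ {n : ℕ}, TauPlusRel n → (Fin n → t.Node) → Prop
  | _, .U, vv => t.blackAt (vv 0).1
  | _, .R, vv => t.edgeC true (vv 0).1 (vv 1).1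
  | _, .B, vv => t.edgeC false (vv 0).1 (vv 1).1

/-- The coloured tree `t` as a `τ⁺`-structure. -/
def CT.Str (t : CT) : tauPlus.Structure t.Node where
  funMap := fun f => ctFunMap t f
  RelMap := fun Rl => ctRelMap t Rl

/-- Satisfaction of a `τ⁺`-sentence in the coloured tree `t`. -/
def CTSat (t : CT) (φ : NNF tauPlus 0) : Prop :=
  φ.Realize t.Str fun i => i.elim0

end QSH
namespace QSH

open FirstOrder Language

/-! ### The `τ⁺`-formulas `ψ̃_p`, `ψ̃_{-p}` and the sentences `φ̃_p`, `φ̃_{-p}` -/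

/-- The pair `(ψ̃_p(y), ψ̃_{-p}(y))` of `τ⁺`-formulas with one free variable `y`:
`ψ̃_ε(x) = ψ̃_{-ε}(x) := U(x)`;
`ψ̃_{∃q}(y) := ∃x (R y x ∧ ψ̃_q(x) ∧ ψ̃_{-q}(x))`;
`ψ̃_{∀q}(y) := ∀x (R y x → ψ̃_q(x) ∨ ψ̃_{-q}(x))`;
and dually with `B` in place of `R` for `ψ̃_{-∃q}`, `ψ̃_{-∀q}`
(written in negation normal form). -/
def psiPair : List Quant → NNF tauPlus 1 × NNF tauPlus 1
  | [] => (.rel TauPlusRel.U ![Term.var 0], .rel TauPlusRel.U ![Term.var 0])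
  | .ex :: q =>
    let P := psiPair q
    let f := P.1.relabel fun _ => (1 : Fin 2)
    let g := P.2.relabel fun _ => (1 : Fin 2)
    ( .ex (.conj (.rel TauPlusRel.R ![Term.var 0, Term.var 1]) (.conj f g)),
      .ex (.conj (.rel TauPlusRel.B ![Term.var 0, Term.var 1]) (.conj f g)) )
  | .fa :: q =>
    let P := psiPair q
    let f := P.1.relabel fun _ => (1 : Fin 2)
    let g := P.2.relabel fun _ => (1 : Fin 2)
    ( .fa (.disj (.nrel TauPlusRel.R ![Term.var 0, Term.var 1]) (.disj f g)),
      .fa (.disj (.nrel TauPlusRel.B ![Term.var 0, Term.var 1]) (.disj f g)) )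

/-- The constant symbol `r` as a closed `τ⁺`-term. -/
def rTerm : tauPlus.Term (Fin 0) := Term.func TauPlusFun.r ![]

/-- The sentence `φ̃_p := ψ̃_p(r)`. -/
def phiTil (p : List Quant) : NNF tauPlus 0 := (psiPair p).1.subst fun _ => rTerm

/-- The sentence `φ̃_{-p} := ψ̃_{-p}(r)`. -/
def phiTilNeg (p : List Quant) : NNF tauPlus 0 := (psiPair p).2.subst fun _ => rTerm

end QSH
namespace QSH

open FirstOrder Language

/-! ### The reduction from `τ⁺` to `τ = ⟨E⟩` -/

/-- The atom `E xᵢ xⱼ` over `τ`. -/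
def Eat {n : ℕ} (i j : Fin n) : NNF tau n := .rel TauRel.E ![Term.var i, Term.var j]

/-- The negated atom `¬ E xᵢ xⱼ` over `τ`. -/
def nEat {n : ℕ} (i j : Fin n) : NNF tau n := .nrel TauRel.E ![Term.var i, Term.var j]

/-- The pair `(ψ'_q(x, y), ψ'_{-q}(x, y))` of `τ`-formulas with two free
variables (variable `0` is `x`, variable `1` is `y`):
`ψ'_ε(x,y) = ψ'_{-ε}(x,y) := Exy ∧ Eyx`;
`ψ'_{∃q}(x,y) := ∃z (Eyz ∧ z ≠ x ∧ ψ'_q(y,z) ∧ ψ'_{-q}(y,z))`;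
`ψ'_{∀q}(x,y) := ∀z (Eyz ∧ z ≠ x → ψ'_q(y,z) ∨ ψ'_{-q}(y,z))`;
and dually with `Ezy` in place of `Eyz` for `ψ'_{-∃q}`, `ψ'_{-∀q}`
(written in negation normal form). -/
def psiRed : List Quant → NNF tau 2 × NNF tau 2
  | [] => (.conj (Eat 0 1) (Eat 1 0), .conj (Eat 0 1) (Eat 1 0))
  | .ex :: q =>
    let P := psiRed q
    let f := P.1.relabel ![1, 2]
    let g := P.2.relabel ![1, 2]
    ( .ex (.conj (Eat 1 2) (.conj (.ne (Term.var 2) (Term.var 0)) (.conj f g))),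
      .ex (.conj (Eat 2 1) (.conj (.ne (Term.var 2) (Term.var 0)) (.conj f g))) )
  | .fa :: q =>
    let P := psiRed q
    let f := P.1.relabel ![1, 2]
    let g := P.2.relabel ![1, 2]
    ( .fa (.disj (nEat 1 2) (.disj (.eq (Term.var 2) (Term.var 0)) (.disj f g))),
      .fa (.disj (nEat 2 1) (.disj (.eq (Term.var 2) (Term.var 0)) (.disj f g))) )

/-- The pair `(ψ'_q(r, y), ψ'_{-q}(r, y))` after the transformation removing the
root: atoms `z ≠ r` are removed and atoms involving the root are replaced by
self-loops.  Variable `0` is `y`. -/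
def chiRed : List Quant → NNF tau 1 × NNF tau 1
  | [] => (.conj (Eat 0 0) (Eat 0 0), .conj (Eat 0 0) (Eat 0 0))
  | .ex :: q =>
    let P := psiRed q
    ( .ex (.conj (Eat 0 1) (.conj P.1 P.2)),
      .ex (.conj (Eat 1 0) (.conj P.1 P.2)) )
  | .fa :: q =>
    let P := psiRed q
    ( .fa (.disj (nEat 0 1) (.disj P.1 P.2)),
      .fa (.disj (nEat 1 0) (.disj P.1 P.2)) )

/-- `φ_{∃∃}`. -/
def phiEE : NNF tau 0 :=
  .ex (.conj (Eat 0 0)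
    (.conj (.ex (.conj (Eat 0 1) (.conj (Eat 1 0) (Eat 1 1))))
           (.ex (.conj (Eat 1 0) (.conj (Eat 0 1) (nEat 1 1))))))

/-- `φ_{∃∀}`. -/
def phiEA : NNF tau 0 :=
  .ex (.conj (Eat 0 0)
    (.conj (.fa (.disj (nEat 0 1) (.conj (Eat 1 0) (Eat 1 1))))
           (.fa (.disj (nEat 1 0) (.conj (Eat 0 1) (nEat 1 1))))))

/-- `φ_{∀∃}`. -/
def phiAE : NNF tau 0 :=
  .fa (.disj (nEat 0 0)
    (.disj (.ex (.conj (Eat 0 1) (.conj (Eat 1 0) (Eat 1 1))))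
           (.ex (.conj (Eat 1 0) (.conj (Eat 0 1) (nEat 1 1))))))

/-- `φ_{∀∀}`. -/
def phiAA : NNF tau 0 :=
  .fa (.disj (nEat 0 0)
    (.disj (.fa (.disj (nEat 0 1) (.conj (Eat 1 0) (Eat 1 1))))
           (.fa (.disj (nEat 1 0) (.conj (Eat 0 1) (nEat 1 1))))))

/-- The `τ`-sentence `φ_p`, obtained from `ψ'_p(r, r)` by replacing the atoms
involving the root by self-loops and removing the atoms `x ≠ r`; the ad hoc
sentences of the paper are used when `|p| = 2`. -/
def phiRed : List Quant → NNF tau 0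
  | [] => .verum
  | [Quant.ex, Quant.ex] => phiEE
  | [Quant.ex, Quant.fa] => phiEA
  | [Quant.fa, Quant.ex] => phiAE
  | [Quant.fa, Quant.fa] => phiAA
  | .ex :: q => .ex (.conj (Eat 0 0) (.conj (chiRed q).1 (chiRed q).2))
  | .fa :: q => .fa (.disj (nEat 0 0) (.disj (chiRed q).1 (chiRed q).2))

/-- The arc relation of the digraph obtained from the coloured tree `t` by the
reduction from `τ⁺` to `τ`:  red edges become forward arcs, blue edges become
backward arcs; arcs are added in both directions between every black leaf and
the junction point of its connected component (its ancestor just below the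
root); each edge from the (deleted) root to a junction point becomes a
self-loop at the junction point; and, when the condition `two` holds (i.e. when
`|p| = 2`), every leaf which is an endpoint of a red edge gets a self-loop. -/
def reducedE (t : CT) (two : Prop) (x y : List ℕ) : Prop :=
  t.edgeC true x y ∨ t.edgeC false y x ∨
  ((t.edgeC true [] x ∨ t.edgeC false [] x) ∧ x = y) ∨
  (t.blackAt x ∧ y = x.take 1) ∨ (t.blackAt y ∧ x = y.take 1) ∨
  (two ∧ x = y ∧ t.leafAt x ∧ ∃ z : List ℕ, t.edgeC true z x ∨ t.edgeC true x z)

/-- The non-root nodes of `t` (the universe after deleting the root). -/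
abbrev CT.NRNode (t : CT) : Type := {x : t.Node // x.1 ≠ []}

/-- Interpretation of `E`. -/
def redRelMap (t : CT) (two : Prop) : ∀ {n : ℕ}, TauRel n → (Fin n → t.NRNode) → Prop
  | _, .E, vv => reducedE t two (vv 0).1.1 (vv 1).1.1

/-- The digraph (`τ`-structure) obtained from `t` by the reduction from `τ⁺`
to `τ`. -/
def reducedStr (t : CT) (two : Prop) : tau.Structure t.NRNode where
  funMap := fun f => Empty.elim f
  RelMap := fun Rl => redRelMap t two Rl

/-- Satisfaction of a `τ`-sentence in the reduced digraph of `t`. -/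
def redSat (t : CT) (two : Prop) (φ : NNF tau 0) : Prop :=
  φ.Realize (reducedStr t two) fun i => i.elim0

end QSH
namespace QSH

/-! ### Rosen's map `f : Γ* → Γ_c*` -/

/-- The alphabet `Γ_c = {∃, ∀, ∃*, ∀*}`. -/
inductive QuantC : Type where
  | ex : QuantC
  | fa : QuantC
  | exStar : QuantC
  | faStar : QuantC
deriving DecidableEq

/-- The dual of a letter of Γ (swap `∃` and `∀`). -/
def Quant.dual : Quant → Quant
  | .ex => .fa
  | .fa => .ex

/-- The dual of a letter of `Γ_c` (swap `∃` with `∀` and `∃*` with `∀*`). -/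
def QuantC.dual : QuantC → QuantC
  | .ex => .fa
  | .fa => .ex
  | .exStar => .faStar
  | .faStar => .exStar

/-- `f` on a single maximal block: `f(∃ⁿ) = a₁ * ⋯ * a_{2n-1}` with `aᵢ = ∀*`
for odd `i` and `aᵢ = ∃` for even `i`, and dually for `f(∀ⁿ)`. -/
def fBlock : Quant → ℕ → List QuantC
  | .ex, n => QuantC.faStar :: (List.replicate (n - 1) [QuantC.ex, QuantC.faStar]).flatten
  | .fa, n => QuantC.exStar :: (List.replicate (n - 1) [QuantC.fa, QuantC.exStar]).flatten

/-- Rosen's map `f : Γ* → Γ_c*`: decompose `p` into maximal constant blocks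
`p = s₁^{i₁} * ⋯ * s_n^{i_n}` and concatenate the images of the blocks. -/
def fMap (p : List Quant) : List QuantC :=
  ((p.splitBy fun a b => a == b).map fun blk => fBlock blk.headI blk.length).flatten

end QSH
namespace QSH

open FirstOrder Language

/-! ### Joins of structures at a point, and automorphisms -/

/-- `e` is an automorphism of the (relational) structure `sA`. -/
def IsAuto {L : FirstOrder.Language} {A : Type*} (sA : L.Structure A) (e : A ≃ A) : Prop :=
  ∀ (n : ℕ) (R : L.Relations n) (vv : Fin n → A), sA.RelMap R vv ↔ sA.RelMap R (e ∘ vv)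

/-- The join `𝔄 ⊕ 𝔅` of two structures on subsets `A`, `B` of an ambient type:
the structure on `A ∪ B` in which each relation is interpreted as the union of
its interpretations in `𝔄` and `𝔅` (the signature is assumed relational). -/
def joinStructure {L : FirstOrder.Language} (hrel : ∀ n : ℕ, IsEmpty (L.Functions n))
    {Ω : Type} (A B : Set Ω) (sA : L.Structure ↥A) (sB : L.Structure ↥B) :
    L.Structure ↥(A ∪ B) where
  funMap := fun {n} f _ => ((hrel n).false f).elim
  RelMap := fun {n} R vv =>
    (∃ u : Fin n → ↥A, (∀ i, (u i : Ω) = (vv i : Ω)) ∧ sA.RelMap R u) ∨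
    (∃ u : Fin n → ↥B, (∀ i, (u i : Ω) = (vv i : Ω)) ∧ sB.RelMap R u)

end QSH
namespace QSH

open FirstOrder Language

/-! Exchanging red and blue is the identity on node addresses, and it turns the `τ⁺`-structure
of a tree into the structure of its colour swap in which the symbols `R` and `B` have traded
places.  Partial isomorphisms, and hence the whole game, are invariant under a bijection of
both structures that renames their relation symbols in the same way. -/

section RenamingIso

variable {L : FirstOrder.Language} {A A' B B' : Type*}

structure IsRenamingIso (sA : L.Structure A) (sA' : L.Structure A')
    (π : ∀ n, L.Relations n → L.Relations n) (e : A ≃ A') : Prop where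
  map_fun : ∀ {n} (f : L.Functions n) (vv : Fin n → A),
    e (sA.funMap f vv) = sA'.funMap f fun i => e (vv i)
  map_rel : ∀ {n} (R : L.Relations n) (vv : Fin n → A),
    (sA'.RelMap R fun i => e (vv i)) ↔ sA.RelMap (π n R) vv

variable {sA : L.Structure A} {sA' : L.Structure A'} {sB : L.Structure B}
  {sB' : L.Structure B'} {π : ∀ n, L.Relations n → L.Relations n} {e : A ≃ A'} {eB : B ≃ B'}

lemma IsRenamingIso.termRealize (hA : IsRenamingIso sA sA' π e) {α : Type*} (vmap : α → A)
    (t : L.Term α) : TermRealize sA' (e ∘ vmap) t = e (TermRealize sA vmap t) := by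
  induction t with
  | var => rfl
  | func f ts ih => simp only [TermRealize, ih, hA.map_fun]

lemma IsRenamingIso.pIso_iff (hA : IsRenamingIso sA sA' π e) (hB : IsRenamingIso sB sB' π eB)
    (hπ : ∀ n, Function.Surjective (π n)) {t : ℕ} (as : Fin t → A) (bs : Fin t → B) :
    PIso sA sB as bs ↔ PIso sA' sB' (e ∘ as) (eB ∘ bs) := by
  simp only [PIso, hA.termRealize, hB.termRealize, e.apply_eq_iff_eq, eB.apply_eq_iff_eq,
    hA.map_rel, hB.map_rel]
  refine and_congr_right fun _ => forall_congr' fun n => ⟨fun H R => H (π n R), fun H R => ?_⟩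
  obtain ⟨R', rfl⟩ := hπ n R
  exact H R'

lemma pIso_comp_cast (sA : L.Structure A) (sB : L.Structure B) {t t' : ℕ} (ht : t' = t)
    (as : Fin t → A) (bs : Fin t → B) :
    PIso sA sB as bs ↔ PIso sA sB (as ∘ Fin.cast ht) (bs ∘ Fin.cast ht) := by
  subst ht
  rfl

lemma IsRenamingIso.histOK_iff (hA : IsRenamingIso sA sA' π e) (hB : IsRenamingIso sB sB' π eB)
    (hπ : ∀ n, Function.Surjective (π n)) (h : List (A × B)) :
    HistOK sA sB h ↔ HistOK sA' sB' (h.map (Prod.map e eB)) := by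
  rw [HistOK, HistOK, hA.pIso_iff hB hπ, pIso_comp_cast sA' sB' (List.length_map _)]
  congr! 1 <;> funext i <;> simp

lemma IsRenamingIso.dWinN_iff (hA : IsRenamingIso sA sA' π e) (hB : IsRenamingIso sB sB' π eB)
    (hπ : ∀ n, Function.Surjective (π n)) (S : QGraph) (k : ℕ) (v : S.V) (h : List (A × B)) :
    DWinN S sA sB k v h ↔ DWinN S sA' sB' k v (h.map (Prod.map e eB)) := by
  induction k generalizing v h with
  | zero => rfl
  | succ k ih =>
    have step : ∀ a b, (HistOK sA sB (h ++ [(a, b)]) ∧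
        ∀ w, S.arc v w → DWinN S sA sB k w (h ++ [(a, b)])) ↔
        (HistOK sA' sB' (h.map (Prod.map e eB) ++ [(e a, eB b)]) ∧
        ∀ w, S.arc v w → DWinN S sA' sB' k w (h.map (Prod.map e eB) ++ [(e a, eB b)])) := by
      intro a b
      have hmap : h.map (Prod.map e eB) ++ [(e a, eB b)] = (h ++ [(a, b)]).map (Prod.map e eB) := by
        simp
      simp only [hmap, hA.histOK_iff hB hπ, ih]
    simp only [DWinN]
    cases S.lab v
    · exact e.forall_congr fun a => eB.exists_congr fun b => step a b
    · exact eB.forall_congr fun b => e.exists_congr fun a => step a b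

lemma IsRenamingIso.dupWins_iff (hA : IsRenamingIso sA sA' π e) (hB : IsRenamingIso sB sB' π eB)
    (hπ : ∀ n, Function.Surjective (π n)) (S : LForest) :
    DupWins S sA sB ↔ DupWins S sA' sB' :=
  and_congr (hA.histOK_iff hB hπ []) (forall₂_congr fun v _ => hA.dWinN_iff hB hπ _ _ v [])

end RenamingIso

lemma CT.children_swap (t : CT) :
    t.swap.children = t.children.map fun p => (!p.1, p.2.swap) := by
  cases t with
  | node b cs =>
    simp only [CT.swap, CT.children]
    exact List.attach_map_val (l := cs) (f := fun p => (!p.1, p.2.swap))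

lemma CT.isBlack_swap (t : CT) : t.swap.isBlack = t.isBlack := by
  cases t
  simp only [CT.swap, CT.isBlack]

lemma CT.sub_swap (addr : List ℕ) (t : CT) : CT.sub addr t.swap = (CT.sub addr t).map CT.swap := by
  induction addr generalizing t with
  | nil => rfl
  | cons i rest ih =>
    simp only [CT.sub, CT.children_swap, List.getElem?_map]
    cases t.children[i]? <;> simp [ih]

lemma CT.blackAt_swap (t : CT) (x : List ℕ) : t.swap.blackAt x ↔ t.blackAt x := by
  simp [CT.blackAt, CT.sub_swap, CT.isBlack_swap]

lemma CT.edgeC_swap (t : CT) (col : Bool) (x y : List ℕ) :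
    t.swap.edgeC col x y ↔ t.edgeC (!col) x y := by
  simp [CT.edgeC, CT.sub_swap, CT.children_swap, or_comm]

def CT.swapEquiv (t : CT) : t.Node ≃ t.swap.Node where
  toFun x := ⟨x.1, by rw [CT.sub_swap, Option.isSome_map]; exact x.2⟩
  invFun x := ⟨x.1, by simpa only [CT.sub_swap, Option.isSome_map] using x.2⟩

def swapRB : ∀ n, TauPlusRel n → TauPlusRel n
  | _, .U => .U
  | _, .R => .B
  | _, .B => .R

lemma swapRB_surjective (n : ℕ) : Function.Surjective (swapRB n) :=
  Function.Involutive.surjective fun r => by cases r <;> rfl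

lemma CT.isRenamingIso_swap (t : CT) : IsRenamingIso t.Str t.swap.Str swapRB t.swapEquiv where
  map_fun f _ := by cases f; rfl
  map_rel r vv := by
    cases r with
    | U => exact t.blackAt_swap (vv 0).1
    | R => exact t.edgeC_swap true (vv 0).1 (vv 1).1
    | B => exact t.edgeC_swap false (vv 0).1 (vv 1).1

theorem game_swap_colours_general (p : List Quant) (m : ℕ)
    (S : LForest) :
    DupWins S (Atil p m).Str (Btil p m).Str ↔
      DupWins S ((Atil p m).swap).Str ((Btil p m).swap).Str :=
  (Atil p m).isRenamingIso_swap.dupWins_iff (Btil p m).isRenamingIso_swap swapRB_surjective S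

theorem game_swap_colours (p : List Quant) (hp : p ≠ []) (m : ℕ) (hm : 0 < m)
    (S : LForest) :
    DupWins S (Atil p m).Str (Btil p m).Str ↔
      DupWins S ((Atil p m).swap).Str ((Btil p m).swap).Str :=
  game_swap_colours_general p m S

end QSH
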